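/- For every D ∈ ℕ with D ≥ 1, every θ > 0, and every δ ∈ ℕ, there exists a constant c > 0 such that the following holds: for every ε ∈ (0,1], every finite simple graph G = (V,E) on n ≥ 2 vertices with maximum degree at most δ that is an ε-expander, and every θ-embedding η : V → ℝ^D, one has stretch(η) ≥ c · n^{1/D} · ε / log(n). -/

import Mathlib

/-- The vertex boundary of `A`: vertices outside `A` adjacent to some vertex of `A`. -/
def vertexBoundary {V : Type*} (G : SimpleGraph V) (A : Set V) : Set V :=
  {v | v ∉ A ∧ ∃ u ∈ A, G.Adj u v}

/-- `G` is an `ε`-expander: `|∂A| ≥ ε·|A|` for all nonempty `A` with `|A| ≤ |V|/2`. -/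
def IsExpander {V : Type*} (G : SimpleGraph V) (ε : ℝ) : Prop :=
  ∀ A : Set V, A.Nonempty → 2 * A.ncard ≤ Nat.card V →
    ε * (A.ncard : ℝ) ≤ ((vertexBoundary G A).ncard : ℝ)

/-- `S` is a separator of `G`: `V = A ⊔ S ⊔ B` with no edge between `A` and `B`,
and `|A|, |B| ≤ 2|V|/3`. -/
def IsSeparator {V : Type*} (G : SimpleGraph V) (S : Set V) : Prop :=
  ∃ A B : Set V,
    Disjoint A S ∧ Disjoint B S ∧ Disjoint A B ∧
    A ∪ S ∪ B = Set.univ ∧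
    (∀ a ∈ A, ∀ b ∈ B, ¬ G.Adj a b) ∧
    3 * A.ncard ≤ 2 * Nat.card V ∧ 3 * B.ncard ≤ 2 * Nat.card V

/-- `η` is a `θ`-embedding: any two distinct vertices are mapped at distance `≥ θ`. -/
def IsThetaEmbedding {V : Type*} (θ : ℝ) {D : ℕ}
    (η : V → EuclideanSpace ℝ (Fin D)) : Prop :=
  ∀ u v : V, u ≠ v → θ ≤ ‖η u - η v‖

/-- The stretch of an embedding: the longest length of an edge. -/
noncomputable def stretch {V : Type*} (G : SimpleGraph V) {D : ℕ}
    (η : V → EuclideanSpace ℝ (Fin D)) : ℝ :=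
  sSup {x : ℝ | ∃ u v : V, G.Adj u v ∧ x = ‖η u - η v‖}

/-- The diameter of a graph: the largest graph distance between two vertices. -/
noncomputable def graphDiam {V : Type*} (G : SimpleGraph V) : ℕ :=
  sSup (Set.range fun p : V × V => G.dist p.1 p.2)

/-- `G` has maximum degree at most `δ`. -/
def maxDegLe {V : Type*} (G : SimpleGraph V) (δ : ℕ) : Prop :=
  ∀ v : V, (G.neighborSet v).ncard ≤ δ

/-- `G` is `t`-dense: some induced subgraph has no separator of size `< t`. -/
def IsDense {V : Type*} (G : SimpleGraph V) (t : ℕ) : Prop :=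
  ∃ U : Set V, ∀ S : Set U, IsSeparator (G.induce U) S → t ≤ S.ncard

/-- The set of edges of `G` whose length under the embedding `η` is at least `L`. -/
def longEdges {V : Type*} (G : SimpleGraph V) {D : ℕ}
    (η : V → EuclideanSpace ℝ (Fin D)) (L : ℝ) : Set (Sym2 V) :=
  {e | e ∈ G.edgeSet ∧ ∀ u v : V, e = s(u, v) → L ≤ ‖η u - η v‖}


open MeasureTheory Metric

section Aux

variable {V : Type} [Fintype V]

/-- Ball of radius `k` around `u` in walk metric. -/
def gBall (G : SimpleGraph V) (u : V) (k : ℕ) : Set V :=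
  {v | ∃ p : G.Walk u v, p.length ≤ k}

lemma gBall_mono (G : SimpleGraph V) (u : V) (k : ℕ) : gBall G u k ⊆ gBall G u (k+1) := by
  rintro v ⟨p, hp⟩; exact ⟨p, hp.trans (Nat.le_succ k)⟩

lemma self_mem_gBall (G : SimpleGraph V) (u : V) (k : ℕ) : u ∈ gBall G u k :=
  ⟨SimpleGraph.Walk.nil, by simp⟩

lemma boundary_subset (G : SimpleGraph V) (u : V) (k : ℕ) :
    vertexBoundary G (gBall G u k) ⊆ gBall G u (k+1) := by
  rintro w ⟨-, x, ⟨p, hp⟩, hadj⟩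
  exact ⟨p.concat hadj, by rw [SimpleGraph.Walk.length_concat]; omega⟩

lemma gBall_growth {G : SimpleGraph V} {ε : ℝ} (hε : 0 < ε) (hG : IsExpander G ε)
    (u : V) (k : ℕ) (h : 2 * (gBall G u k).ncard ≤ Nat.card V) :
    (1 + ε) * ((gBall G u k).ncard : ℝ) ≤ ((gBall G u (k+1)).ncard : ℝ) := by
  set A := gBall G u k
  have hA : A.Nonempty := ⟨u, self_mem_gBall G u k⟩
  have hexp := hG A hA h
  have hdisj : Disjoint A (vertexBoundary G A) := by
    rw [Set.disjoint_left]; rintro x hx ⟨hx', -⟩; exact hx' hx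
  have hsub : A ∪ vertexBoundary G A ⊆ gBall G u (k+1) :=
    Set.union_subset (gBall_mono G u k) (boundary_subset G u k)
  have hcard : A.ncard + (vertexBoundary G A).ncard ≤ (gBall G u (k+1)).ncard := by
    rw [← Set.ncard_union_eq hdisj (Set.toFinite _) (Set.toFinite _)]
    exact Set.ncard_le_ncard hsub (Set.toFinite _)
  have := Nat.cast_le (α := ℝ).2 hcard
  push_cast at this
  nlinarith

lemma gBall_alternative {G : SimpleGraph V} {ε : ℝ} (hε : 0 < ε) (hG : IsExpander G ε)
    (u : V) (k : ℕ) :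
    (Nat.card V : ℝ) < 2 * ((gBall G u k).ncard : ℝ) ∨
      (1 + ε) ^ k ≤ ((gBall G u k).ncard : ℝ) := by
  induction k with
  | zero =>
    right
    have : 0 < (gBall G u 0).ncard :=
      (Set.ncard_pos (Set.toFinite _)).2 ⟨u, self_mem_gBall G u 0⟩
    simpa using (Nat.one_le_cast (α := ℝ)).2 this
  | succ k ih =>
    have hmono : ((gBall G u k).ncard : ℝ) ≤ ((gBall G u (k+1)).ncard : ℝ) :=
      Nat.cast_le.2 (Set.ncard_le_ncard (gBall_mono G u k) (Set.toFinite _))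
    rcases ih with h | h
    · left; linarith
    · by_cases h2 : 2 * (gBall G u k).ncard ≤ Nat.card V
      · right
        have := gBall_growth hε hG u k h2
        have h0 : (0:ℝ) ≤ (1+ε)^k := by positivity
        calc (1+ε)^(k+1) = (1+ε) * (1+ε)^k := by ring
          _ ≤ (1+ε) * ((gBall G u k).ncard : ℝ) := by nlinarith
          _ ≤ _ := this
      · left
        push_neg at h2
        have : (Nat.card V : ℝ) < 2 * ((gBall G u k).ncard : ℝ) := by exact_mod_cast h2
        linarith

lemma edge_le_stretch (G : SimpleGraph V) {D : ℕ} (η : V → EuclideanSpace ℝ (Fin D))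
    {a b : V} (h : G.Adj a b) : ‖η a - η b‖ ≤ stretch G η := by
  apply le_csSup
  · apply Set.Finite.bddAbove
    apply Set.Finite.subset (Set.finite_range fun p : V × V => ‖η p.1 - η p.2‖)
    rintro x ⟨u, v, -, rfl⟩; exact ⟨(u, v), rfl⟩
  · exact ⟨a, b, h, rfl⟩

lemma walk_le_stretch (G : SimpleGraph V) {D : ℕ} (η : V → EuclideanSpace ℝ (Fin D))
    {u v : V} (p : G.Walk u v) : ‖η u - η v‖ ≤ p.length * stretch G η := by
  induction p with
  | nil => simp
  | @cons a b c hadj q ih =>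
    have h1 : ‖η a - η c‖ ≤ ‖η a - η b‖ + ‖η b - η c‖ := by
      have := norm_add_le (η a - η b) (η b - η c)
      simpa using this
    have h2 := edge_le_stretch G η hadj
    rw [SimpleGraph.Walk.length_cons]
    push_cast
    nlinarith

end Aux

lemma geom_sep {D : ℕ} (hD : 1 ≤ D) {θ : ℝ} (hθ : 0 < θ) {V : Type} [Fintype V]
    (hn : 2 ≤ Nat.card V) (η : V → EuclideanSpace ℝ (Fin D))
    (hη : ∀ u v : V, u ≠ v → θ ≤ ‖η u - η v‖) :
    ∃ u v : V, θ / 4 * (Nat.card V : ℝ) ^ (1 / (D : ℝ)) ≤ ‖η u - η v‖ := by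
  haveI : Nonempty V := (Nat.card_pos_iff.mp (by omega)).1
  haveI : Nontrivial (EuclideanSpace ℝ (Fin D)) := by
    apply Module.nontrivial_of_finrank_pos (R := ℝ)
    rw [finrank_euclideanSpace_fin]; omega
  obtain ⟨u₀⟩ := ‹Nonempty V›
  set R : ℝ := Finset.univ.sup' Finset.univ_nonempty (fun v => ‖η v - η u₀‖) with hR
  have hRle : ∀ v : V, ‖η v - η u₀‖ ≤ R := fun v => by rw [hR]; exact Finset.le_sup' (fun v => ‖η v - η u₀‖) (Finset.mem_univ v)
  -- R ≥ θ : there is a vertex ≠ u₀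
  have hRθ : θ ≤ R := by
    have : ∃ v : V, v ≠ u₀ := by
      by_contra h
      push_neg at h
      have : Nat.card V = 1 := by
        rw [Nat.card_eq_one_iff_exists]
        exact ⟨u₀, fun v => h v⟩
      omega
    obtain ⟨v, hv⟩ := this
    exact (hη v u₀ hv).trans (hRle v)
  have hR0 : 0 < R := lt_of_lt_of_le hθ hRθ
  -- volume packing
  set n := Nat.card V
  have hballs : ∀ v : V, ball (η v) (θ/2) ⊆ ball (η u₀) (R + θ/2) := by
    intro v x hx
    rw [mem_ball] at hx ⊢
    calc dist x (η u₀) ≤ dist x (η v) + dist (η v) (η u₀) := dist_triangle _ _ _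
      _ < θ/2 + R := by
          have h1 := hRle v
          simp only [dist_eq_norm] at hx ⊢
          linarith
      _ = R + θ/2 := by ring
  have hdisj : (↑(Finset.univ : Finset V) : Set V).PairwiseDisjoint
      (fun v => ball (η v) (θ/2)) := by
    intro a _ b _ hab
    apply Set.disjoint_left.2
    intro x hxa hxb
    rw [mem_ball] at hxa hxb
    have := hη a b hab
    rw [← dist_eq_norm] at this
    have := dist_triangle (η a) x (η b)
    rw [dist_comm (η a) x] at this
    linarith [hη a b hab, (by rw [dist_eq_norm] : dist (η a) (η b) = ‖η a - η b‖)]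
  have hmeas : volume (⋃ v ∈ (Finset.univ : Finset V), ball (η v) (θ/2))
      = ∑ v : V, volume (ball (η v) (θ/2)) :=
    measure_biUnion_finset hdisj (fun v _ => measurableSet_ball)
  have hvol : (fun v : V => volume (ball (η v) (θ/2)))
      = fun v => ENNReal.ofReal ((θ/2) ^ D) * volume (ball (0 : EuclideanSpace ℝ (Fin D)) 1) := by
    funext v
    rw [Measure.addHaar_ball volume (η v) (by positivity : (0:ℝ) ≤ θ/2), finrank_euclideanSpace_fin]
  have hbig : volume (ball (η u₀) (R + θ/2))
      = ENNReal.ofReal ((R + θ/2) ^ D) * volume (ball (0 : EuclideanSpace ℝ (Fin D)) 1) := by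
    rw [Measure.addHaar_ball volume (η u₀) (by positivity : (0:ℝ) ≤ R + θ/2),
      finrank_euclideanSpace_fin]
  set B := volume (ball (0 : EuclideanSpace ℝ (Fin D)) 1)
  have hB0 : B ≠ 0 := (measure_ball_pos volume _ one_pos).ne'
  have hBtop : B ≠ ⊤ := measure_ball_lt_top.ne
  have hle : (n : ENNReal) * (ENNReal.ofReal ((θ/2) ^ D) * B) ≤ ENNReal.ofReal ((R + θ/2) ^ D) * B := by
    rw [← hbig]
    calc (n : ENNReal) * (ENNReal.ofReal ((θ/2) ^ D) * B)
        = ∑ v : V, (ENNReal.ofReal ((θ/2) ^ D) * B) := by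
          rw [Finset.sum_const, nsmul_eq_mul]
          congr 1
          simp [n, Nat.card_eq_fintype_card]
      _ = ∑ v : V, volume (ball (η v) (θ/2)) := by rw [hvol]
      _ = volume (⋃ v ∈ (Finset.univ : Finset V), ball (η v) (θ/2)) := hmeas.symm
      _ ≤ volume (ball (η u₀) (R + θ/2)) := by
          apply measure_mono
          simp only [Set.iUnion_subset_iff]
          intro v _
          exact hballs v
  rw [← mul_assoc] at hle
  have hle2 : (n : ENNReal) * ENNReal.ofReal ((θ/2) ^ D) ≤ ENNReal.ofReal ((R + θ/2) ^ D) :=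
    (ENNReal.mul_le_mul_iff_left hB0 hBtop).1 hle
  have hreal : (n : ℝ) * (θ/2) ^ D ≤ (R + θ/2) ^ D := by
    have h1 : (n : ENNReal) * ENNReal.ofReal ((θ/2) ^ D) = ENNReal.ofReal ((n : ℝ) * (θ/2)^D) := by
      rw [ENNReal.ofReal_mul (by positivity)]
      congr 1
      simp [ENNReal.ofReal_natCast]
    rw [h1] at hle2
    have := (ENNReal.ofReal_le_ofReal_iff (by positivity)).1 hle2
    exact this
  -- take D-th roots
  have hDne : (D : ℝ) ≠ 0 := by positivity
  have hn0 : (0:ℝ) ≤ (n : ℝ) := Nat.cast_nonneg n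
  set t : ℝ := (n : ℝ) ^ (1 / (D : ℝ)) with ht
  have ht0 : 0 ≤ t := Real.rpow_nonneg hn0 _
  have htD : t ^ D = (n : ℝ) := by
    rw [ht, ← Real.rpow_natCast ((n:ℝ) ^ (1/(D:ℝ))) D, ← Real.rpow_mul hn0]
    rw [one_div_mul_cancel hDne, Real.rpow_one]
  have hpow : (θ/2 * t) ^ D ≤ (R + θ/2) ^ D := by
    rw [mul_pow, htD]
    calc (θ/2)^D * (n:ℝ) = (n:ℝ) * (θ/2)^D := by ring
      _ ≤ _ := hreal
  have hroot : θ/2 * t ≤ R + θ/2 :=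
    le_of_pow_le_pow_left₀ (by omega) (by positivity) hpow
  -- conclude θ/4 * t ≤ R
  have ht1 : 1 ≤ t := by
    apply Real.one_le_rpow (by exact_mod_cast (by omega : 1 ≤ n)) (by positivity)
  have hfinal : θ/4 * t ≤ R := by
    rcases le_or_gt t 2 with h | h
    · nlinarith
    · nlinarith
  obtain ⟨v, -, hv⟩ := Finset.exists_mem_eq_sup' (Finset.univ_nonempty (α := V))
    (fun v => ‖η v - η u₀‖)
  exact ⟨v, u₀, by rw [← hv]; exact hfinal⟩

/-- For every `D ≥ 1`, `θ > 0` and `δ` there is `c > 0` such that for every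
`ε ∈ (0,1]`, every `ε`-expander `G` on `n ≥ 2` vertices of maximum degree `≤ δ`,
and every `θ`-embedding `η` into `ℝ^D`, `stretch(η) ≥ c · n^{1/D} · ε / log n`. -/
theorem stmt_3 (D : ℕ) (hD : 1 ≤ D) (θ : ℝ) (hθ : 0 < θ) (δ : ℕ) :
    ∃ c : ℝ, 0 < c ∧
      ∀ (ε : ℝ), ε ∈ Set.Ioc (0 : ℝ) 1 →
      ∀ (V : Type) [Fintype V] (G : SimpleGraph V),
        2 ≤ Nat.card V → maxDegLe G δ → IsExpander G ε →
        ∀ η : V → EuclideanSpace ℝ (Fin D), IsThetaEmbedding θ η →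
          c * (Nat.card V : ℝ) ^ (1 / (D : ℝ)) * ε / Real.log (Nat.card V)
            ≤ stretch G η := by
  refine ⟨θ/40, by positivity, ?_⟩
  rintro ε ⟨hε0, hε1⟩ V _ G hn hdeg hexp η hη
  set n := Nat.card V with hndef
  have hn2 : (2:ℝ) ≤ (n:ℝ) := by exact_mod_cast hn
  have hlogn : 0 < Real.log n := Real.log_pos (by linarith)
  have hlog2 : Real.log 2 ≤ Real.log n := Real.log_le_log (by norm_num) hn2
  have hl2 : (0.6931471803:ℝ) < Real.log 2 := Real.log_two_gt_d9
  -- the radius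
  set K : ℕ := ⌈2 * Real.log n / ε⌉₊ + 1 with hKdef
  have hKge : 2 * Real.log n / ε + 1 ≤ (K:ℝ) := by
    rw [hKdef]
    push_cast
    have := Nat.le_ceil (2 * Real.log n / ε)
    linarith
  have hKle : (K:ℝ) ≤ 2 * Real.log n / ε + 2 := by
    rw [hKdef]
    push_cast
    have := Nat.ceil_lt_add_one (a := 2 * Real.log n / ε) (by positivity)
    linarith
  -- log(1+ε) ≥ ε/2
  have hlog1ε : ε/2 ≤ Real.log (1+ε) := by
    have ha : 1 - ε/2 ≤ Real.exp (-(ε/2)) := by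
      have := Real.add_one_le_exp (-(ε/2)); linarith
    have hmul : Real.exp (ε/2) * Real.exp (-(ε/2)) = 1 := by
      rw [← Real.exp_add]; simp
    have hb : (0:ℝ) < 1 - ε/2 := by linarith
    have hexp1 : Real.exp (ε/2) ≤ 1 + ε := by
      nlinarith [Real.exp_pos (ε/2)]
    have := Real.log_le_log (Real.exp_pos (ε/2)) hexp1
    rwa [Real.log_exp] at this
  -- (1+ε)^K > n
  have hpowK : (n:ℝ) < (1+ε)^K := by
    have hA : (2*Real.log n/ε + 1) * (ε/2) = Real.log n + ε/2 := by
      field_simp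
    have hKlog : Real.log n < (K:ℝ) * Real.log (1+ε) := by
      have h1 : (2*Real.log n/ε + 1) * (ε/2) ≤ (K:ℝ) * Real.log (1+ε) :=
        mul_le_mul hKge hlog1ε (by linarith) (by positivity)
      rw [hA] at h1; linarith
    calc (n:ℝ) = Real.exp (Real.log n) := (Real.exp_log (by linarith)).symm
      _ < Real.exp ((K:ℝ) * Real.log (1+ε)) := Real.exp_lt_exp.2 hKlog
      _ = (1+ε)^K := by
          rw [← Real.log_pow, Real.exp_log (by positivity)]
  -- every ball of radius K contains more than half the vertices
  have hball : ∀ u : V, n < 2 * (gBall G u K).ncard := by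
    intro u
    rcases gBall_alternative hε0 hexp u K with h | h
    · exact_mod_cast h
    · exfalso
      have hle : ((gBall G u K).ncard : ℝ) ≤ (n:ℝ) := by
        have : (gBall G u K).ncard ≤ n := by
          calc (gBall G u K).ncard ≤ (Set.univ : Set V).ncard :=
                Set.ncard_le_ncard (Set.subset_univ _) Set.finite_univ
            _ = n := Set.ncard_univ V
        exact_mod_cast this
      linarith
  -- far apart pair
  obtain ⟨u, v, huv⟩ := geom_sep hD hθ hn η hη
  -- balls intersect
  have hndisj : ¬ Disjoint (gBall G u K) (gBall G v K) := by
    intro hd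
    have h1 := Set.ncard_union_eq hd (Set.toFinite _) (Set.toFinite _)
    have h2 : (gBall G u K ∪ gBall G v K).ncard ≤ n := by
      calc (gBall G u K ∪ gBall G v K).ncard ≤ (Set.univ : Set V).ncard :=
            Set.ncard_le_ncard (Set.subset_univ _) Set.finite_univ
        _ = n := Set.ncard_univ V
    have ha := hball u
    have hb := hball v
    omega
  obtain ⟨w, ⟨p, hp⟩, ⟨q, hq⟩⟩ := Set.not_disjoint_iff.1 hndisj
  set P : SimpleGraph.Walk G u v := p.append q.reverse with hPdef
  have hPlen : P.length ≤ 2 * K := by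
    rw [hPdef, SimpleGraph.Walk.length_append, SimpleGraph.Walk.length_reverse]
    omega
  have hle := walk_le_stretch G η P
  have hrp : (0:ℝ) < (n:ℝ) ^ (1/(D:ℝ)) := Real.rpow_pos_of_pos (by linarith) _
  have hnorm : 0 < ‖η u - η v‖ := lt_of_lt_of_le (by positivity) huv
  have hs0 : 0 < stretch G η := by
    by_contra hs
    push_neg at hs
    have : (P.length : ℝ) * stretch G η ≤ 0 :=
      mul_nonpos_of_nonneg_of_nonpos (Nat.cast_nonneg _) hs
    linarith
  have hchain : ‖η u - η v‖ ≤ (2*K : ℝ) * stretch G η := by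
    calc ‖η u - η v‖ ≤ (P.length : ℝ) * stretch G η := hle
      _ ≤ (2*K : ℝ) * stretch G η := by
          apply mul_le_mul_of_nonneg_right _ hs0.le
          exact_mod_cast hPlen
  have hLge : Real.log 2 ≤ Real.log (n:ℝ) / ε := by
    rw [le_div_iff₀ hε0]
    nlinarith
  have hKle' : (K:ℝ) ≤ 2 * (Real.log (n:ℝ) / ε) + 2 := by
    rw [mul_div_assoc] at hKle
    exact hKle
  have h2K : (2*K : ℝ) ≤ 10 * (Real.log (n:ℝ) / ε) := by linarith
  -- conclude
  have hfin : ‖η u - η v‖ ≤ (10 * (Real.log (n:ℝ) / ε)) * stretch G η :=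
    hchain.trans (mul_le_mul_of_nonneg_right h2K hs0.le)
  rw [← hndef] at huv
  have h1 := huv.trans hfin
  have hmain : θ/4 * (n:ℝ)^(1/(D:ℝ)) * ε ≤ 10 * Real.log (n:ℝ) * stretch G η := by
    have h2 : (10 * (Real.log (n:ℝ) / ε) * stretch G η) * ε
        = 10 * Real.log (n:ℝ) * stretch G η := by
      field_simp
    have h3 := mul_le_mul_of_nonneg_right h1 hε0.le
    rw [h2] at h3
    exact h3
  rw [div_le_iff₀ hlogn]
  linarith
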